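/- Axiom AxKhMono is valid: for any model M, state s, formula φ, and groups G ⊆ H ⊆ I, if M,s ⊨ Kh_G φ then M,s ⊨ Kh_H φ. -/

import Mathlib

namespace DKH

/-- Groups of agents: subsets of the finite agent set `I = {i_0, …, i_{n-1}}`. -/
abbrev Grp (n : ℕ) := Finset (Fin n)

/-- The language DKH: φ ::= ⊤ | p | ¬φ | (φ∧φ) | K_G φ | Kh_G φ. -/
inductive Formula (P : Type) (n : ℕ) : Type
  | top  : Formula P n
  | atom : P → Formula P n
  | neg  : Formula P n → Formula P n
  | and  : Formula P n → Formula P n → Formula P n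
  | K    : Grp n → Formula P n → Formula P n
  | Kh   : Grp n → Formula P n → Formula P n

instance {P n} : Inhabited (Formula P n) := ⟨.top⟩

namespace Formula
/-- Defined implication φ → ψ := ¬(φ ∧ ¬ψ). -/
def imp {P n} (φ ψ : Formula P n) : Formula P n := .neg (φ.and ψ.neg)
/-- Defined falsum ⊥ := ¬⊤. -/
def bot {P : Type} {n : ℕ} : Formula P n := .neg .top
end Formula

/-- A model ⟨S, {∼_i}, {A_G}, {→_a}, V⟩. -/
structure KhModel (P : Type) (n : ℕ) where
  State : Type
  Act : Type
  sim : Fin n → State → State → Prop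
  sim_equiv : ∀ i, Equivalence (sim i)
  A : Grp n → Set Act
  A_empty : A ∅ = ∅
  A_disj : ∀ G H : Grp n, G ⊂ H → A G ∩ A H = ∅
  tr : Act → State → State → Prop
  V : P → Set State

/-- Distributed indistinguishability: s ∼_G t iff s ∼_i t for every i ∈ G. -/
def gsim {P n} (M : KhModel P n) (G : Grp n) (s t : M.State) : Prop :=
  ∀ i ∈ G, M.sim i s t

/-- Distributed actions: atomic group actions, or joint tuples ⟨d_0,…,d_k⟩. -/
inductive DAct (Act : Type) : Type
  | atom : Act → DAct Act
  | joint : List (DAct Act) → DAct Act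

mutual
/-- Distributed transition relation: →_{⟨d_0,…,d_k⟩} = ⋂_j →_{d_j}. -/
def dtr {Act State : Type} (tr : Act → State → State → Prop) :
    DAct Act → State → State → Prop
  | .atom a, s, t => tr a s t
  | .joint ds, s, t => dtrList tr ds s t

def dtrList {Act State : Type} (tr : Act → State → State → Prop) :
    List (DAct Act) → State → State → Prop
  | [], _, _ => True
  | d :: ds, s, t => dtr tr d s t ∧ dtrList tr ds s t
end

/-- `Gs` is a partial partition of `G`: a family of nonempty, pairwise disjoint
blocks, all included in `G` (i.e. a partition of a subset of `G`). -/
def PartialPartition {n : ℕ} (G : Grp n) (Gs : List (Grp n)) : Prop :=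
  (∀ B ∈ Gs, B ≠ ∅) ∧ Gs.Pairwise (fun B C => Disjoint B C) ∧ (∀ B ∈ Gs, B ⊆ G)

/-- The fixed ordering on mutually disjoint nonempty groups: G ≺ H iff the
minimal index of an agent in G is below that of H. -/
def grpLt {n : ℕ} (B C : Grp n) : Prop := B.min < C.min

/-- Membership in the set A*_G of distributed actions of group G:
the closure of A^+_G = ⋃_{G'⊆G} A_{G'} under forming joint actions
⟨d_0,…,d_k⟩ ∈ A*_{G_0} × ⋯ × A*_{G_k} for non-trivial partial partitions
{G_0,…,G_k} of G listed in the fixed order ≺. -/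
inductive star {n : ℕ} {Act : Type} (A : Grp n → Set Act) : Grp n → DAct Act → Prop
  | base {G G' : Grp n} {a : Act} :
      G' ⊆ G → a ∈ A G' → star A G (.atom a)
  | joint {G : Grp n} {Gs : List (Grp n)} {ds : List (DAct Act)} :
      2 ≤ Gs.length → PartialPartition G Gs → Gs.Chain' grpLt →
      List.Forall₂ (star A) Gs ds → star A G (.joint ds)

/-- Membership in A^+_G = ⋃_{G'⊆G} A_{G'} (as a set of distributed actions). -/
def inAplus {n : ℕ} {Act : Type} (A : Grp n → Set Act) (G : Grp n) (d : DAct Act) : Prop :=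
  ∃ G' : Grp n, G' ⊆ G ∧ ∃ a ∈ A G', d = .atom a

/-- d is executable on X if every s ∈ X has a d-successor. -/
def ExecutableOn {P n} (M : KhModel P n) (d : DAct M.Act) (X : Set M.State) : Prop :=
  ∀ s ∈ X, ∃ t, dtr M.tr d s t

/-- A strategy of group G: a partial function from ∼_G-equivalence classes to
A*_G such that the prescribed action is executable on the class. -/
structure Strategy {P n} (M : KhModel P n) (G : Grp n) where
  act : M.State → Option (DAct M.Act)
  uniform : ∀ s t, gsim M G s t → act s = act t
  mem_star : ∀ s d, act s = some d → star M.A G d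
  exec : ∀ s d, act s = some d → ∀ t, gsim M G s t → ∃ u, dtr M.tr d t u

/-- One step of an execution: [s]_G →_{σ([s]_G)} [t]_G. -/
def stepRel {P n} {M : KhModel P n} {G : Grp n} (σ : Strategy M G) (s t : M.State) : Prop :=
  ∃ d, σ.act s = some d ∧ ∃ u v, gsim M G s u ∧ gsim M G t v ∧ dtr M.tr d u v

/-- Leaf-nodes of the finite complete executions of σ starting from [s]_G,
as a ∼_G-closed set of states. -/
def CELeaf {P n} {M : KhModel P n} {G : Grp n} (σ : Strategy M G) (s : M.State) :
    Set M.State :=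
  {t | ∃ (m : ℕ) (f : ℕ → M.State), gsim M G s (f 0) ∧
    (∀ j < m, stepRel σ (f j) (f (j+1))) ∧ σ.act (f m) = none ∧ gsim M G (f m) t}

/-- There is an infinite (hence complete) execution of σ starting from [s]_G. -/
def InfiniteFrom {P n} {M : KhModel P n} {G : Grp n} (σ : Strategy M G) (s : M.State) : Prop :=
  ∃ f : ℕ → M.State, gsim M G s (f 0) ∧ ∀ j, stepRel σ (f j) (f (j+1))

/-- Inner-nodes of the complete executions of σ starting from [s]_G,
as a ∼_G-closed set of states. -/
def CEInner {P n} {M : KhModel P n} {G : Grp n} (σ : Strategy M G) (s : M.State) :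
    Set M.State :=
  {t | (∃ (m : ℕ) (f : ℕ → M.State), gsim M G s (f 0) ∧
          (∀ j < m, stepRel σ (f j) (f (j+1))) ∧ σ.act (f m) = none ∧
          ∃ j < m, gsim M G (f j) t) ∨
       (∃ f : ℕ → M.State, gsim M G s (f 0) ∧
          (∀ j, stepRel σ (f j) (f (j+1))) ∧ ∃ j, gsim M G (f j) t)}

/-- Truth at a pointed model. -/
def Sat {P n} (M : KhModel P n) : M.State → Formula P n → Prop
  | _, .top => True
  | s, .atom p => s ∈ M.V p
  | s, .neg φ => ¬ Sat M s φ
  | s, .and φ ψ => Sat M s φ ∧ Sat M s ψ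
  | s, .K G φ => ∀ t, gsim M G s t → Sat M t φ
  | s, .Kh G φ => ∃ σ : Strategy M G,
      (∀ t ∈ CELeaf σ s, Sat M t φ) ∧ ¬ InfiniteFrom σ s

/-- Boolean evaluation treating ⊤, ¬, ∧ as connectives and everything else
as atoms; used to define propositional tautologies. -/
def beval {P n} (v : Formula P n → Bool) : Formula P n → Bool
  | .top => true
  | .atom p => v (.atom p)
  | .neg φ => !(beval v φ)
  | .and φ ψ => beval v φ && beval v ψ
  | .K G φ => v (.K G φ)
  | .Kh G φ => v (.Kh G φ)

/-- Instances of propositional tautologies. -/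
def IsTaut {P n} (φ : Formula P n) : Prop := ∀ v, beval v φ = true

/-- The proof system SDKH. -/
inductive Provable {P : Type} {n : ℕ} : Formula P n → Prop
  | taut {φ} : IsTaut φ → Provable φ
  | distK {G : Grp n} {φ ψ} :
      Provable (((Formula.K G φ).and (Formula.K G (φ.imp ψ))).imp (Formula.K G ψ))
  | axT {G : Grp n} {φ} : Provable ((Formula.K G φ).imp φ)
  | ax4 {G : Grp n} {φ} : Provable ((Formula.K G φ).imp (Formula.K G (Formula.K G φ)))
  | ax5 {G : Grp n} {φ} :
      Provable ((Formula.neg (Formula.K G φ)).imp (Formula.K G (Formula.neg (Formula.K G φ))))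
  | axKMono {G H : Grp n} {φ} : G ⊆ H → Provable ((Formula.K G φ).imp (Formula.K H φ))
  | axKhMono {G H : Grp n} {φ} : G ⊆ H → Provable ((Formula.Kh G φ).imp (Formula.Kh H φ))
  | axKtoKh {G : Grp n} {φ} : Provable ((Formula.K G φ).imp (Formula.Kh G φ))
  | axEmpKhtoK {φ} : Provable ((Formula.Kh ∅ φ).imp (Formula.K ∅ φ))
  | axKhtoKKh {G : Grp n} {φ} : Provable ((Formula.Kh G φ).imp (Formula.K G (Formula.Kh G φ)))
  | axEmpMono {G : Grp n} {φ ψ} :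
      Provable ((Formula.K ∅ (φ.imp ψ)).imp (Formula.K ∅ ((Formula.Kh G φ).imp (Formula.Kh G ψ))))
  | axKhbot {G : Grp n} : Provable ((Formula.Kh G Formula.bot).imp Formula.bot)
  | axKhtoKhK {G : Grp n} {φ} : Provable ((Formula.Kh G φ).imp (Formula.Kh G (Formula.K G φ)))
  | axKhKh {G : Grp n} {φ} : Provable ((Formula.Kh G (Formula.Kh G φ)).imp (Formula.Kh G φ))
  | mp {φ ψ} : Provable (φ.imp ψ) → Provable φ → Provable ψ
  | necK {G : Grp n} {φ} : Provable φ → Provable (Formula.K G φ)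

/-- Conjunction of a finite list of formulas. -/
def conj {P n} (L : List (Formula P n)) : Formula P n := L.foldr Formula.and Formula.top

/-- SDKH-consistency of a set of formulas. -/
def Consistent {P n} (X : Set (Formula P n)) : Prop :=
  ¬ ∃ L : List (Formula P n), (∀ φ ∈ L, φ ∈ X) ∧ Provable ((conj L).imp Formula.bot)

/-- Maximal consistent sets. -/
def MCS {P n} (X : Set (Formula P n)) : Prop :=
  Consistent X ∧ ∀ φ ∉ X, ¬ Consistent (insert φ X)

/-! ### The canonical model -/

/-- One step ⟨(φ,G),H⟩X of a mixed sequence. -/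
structure CStep (P : Type) (n : ℕ) where
  fml : Formula P n
  G : Grp n
  H : Grp n
  X : Set (Formula P n)

instance {P n} : Inhabited (CStep P n) := ⟨⟨.top, ∅, ∅, ∅⟩⟩

/-- The conditions on a mixed sequence X_0⟨(φ_1,G_1),H_1⟩X_1⋯⟨(φ_n,G_n),H_n⟩X_n
(the previous MCS being `X`). -/
def goodFrom {P n} : Set (Formula P n) → List (CStep P n) → Prop
  | _, [] => True
  | X, c :: rest =>
      MCS c.X ∧ c.G ≠ ∅ ∧ (Formula.Kh c.G c.fml) ∈ X ∧ (Formula.K c.G c.fml) ∈ c.X ∧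
      (∀ ψ, (Formula.K c.H ψ) ∈ X → ψ ∈ c.X) ∧ goodFrom c.X rest

/-- The final MCS `ed(s)` of a mixed sequence. -/
def edOf {P n} (X0 : Set (Formula P n)) (l : List (CStep P n)) : Set (Formula P n) :=
  l.foldl (fun _ c => c.X) X0

/-- States of the canonical model: mixed sequences starting at X_0. -/
def CState {P : Type} {n : ℕ} (X0 : Set (Formula P n)) := {l : List (CStep P n) // goodFrom X0 l}

/-- Canonical epistemic relation ∼^c_i. -/
def csim {P n} (X0 : Set (Formula P n)) (i : Fin n) (s t : CState X0) : Prop :=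
  ∃ k : ℕ, k ≤ s.1.length ∧ k ≤ t.1.length ∧
    (∀ j < k, (s.1.getD j default).X = (t.1.getD j default).X ∧
              (s.1.getD j default).H = (t.1.getD j default).H) ∧
    (∀ j, k ≤ j → j < s.1.length → i ∈ (s.1.getD j default).H) ∧
    (∀ j, k ≤ j → j < t.1.length → i ∈ (t.1.getD j default).H)

/-- Canonical atomic actions: pairs (φ, G). -/
abbrev CAct (P : Type) (n : ℕ) := Formula P n × Grp n

/-- Canonical atomic action sets A^c_G = {(φ,G) : φ ∈ DKH} for G ≠ ∅, A^c_∅ = ∅. -/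
def cA {P : Type} {n : ℕ} (G : Grp n) : Set (CAct P n) := {a | a.2 = G ∧ G ≠ ∅}

/-- Canonical transition: s →_{(φ,G)} t iff t = s⟨(φ,G),G'⟩X for some G' and MCS X. -/
def ctr {P n} (X0 : Set (Formula P n)) (a : CAct P n) (s t : CState X0) : Prop :=
  ∃ (G' : Grp n) (Y : Set (Formula P n)), MCS Y ∧ t.1 = s.1 ++ [⟨a.1, a.2, G', Y⟩]

theorem csim_equiv {P n} (X0 : Set (Formula P n)) (i : Fin n) : Equivalence (csim X0 i) := by
  constructor
  · intro s
    exact ⟨s.1.length, le_rfl, le_rfl, fun j _ => ⟨rfl, rfl⟩,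
      fun j h1 h2 => absurd h2 (by omega), fun j h1 h2 => absurd h2 (by omega)⟩
  · rintro s t ⟨k, h1, h2, h3, h4, h5⟩
    exact ⟨k, h2, h1, fun j hj => ⟨(h3 j hj).1.symm, (h3 j hj).2.symm⟩, h5, h4⟩
  · rintro s t u ⟨k1, hk1s, hk1t, heq1, hs1, ht1⟩ ⟨k2, hk2t, hk2u, heq2, ht2, hu2⟩
    refine ⟨min k1 k2, le_trans (min_le_left _ _) hk1s, le_trans (min_le_right _ _) hk2u,
      ?_, ?_, ?_⟩
    · intro j hj
      have e1 := heq1 j (lt_of_lt_of_le hj (min_le_left _ _))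
      have e2 := heq2 j (lt_of_lt_of_le hj (min_le_right _ _))
      exact ⟨e1.1.trans e2.1, e1.2.trans e2.2⟩
    · intro j hj hjs
      by_cases h : k1 ≤ j
      · exact hs1 j h hjs
      · have hj2 : k2 ≤ j := by omega
        have hjt : j < t.1.length := by omega
        have := ht2 j hj2 hjt
        have e := (heq1 j (by omega)).2
        rw [e]; exact this
    · intro j hj hju
      by_cases h : k2 ≤ j
      · exact hu2 j h hju
      · have hj1 : k1 ≤ j := by omega
        have hjt : j < t.1.length := by omega
        have := ht1 j hj1 hjt
        have e := (heq2 j (by omega)).2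
        rw [← e]; exact this

theorem cA_empty {P : Type} {n : ℕ} : (cA (P := P) (n := n) ∅) = ∅ := by
  ext a; simp [cA]

theorem cA_disj {P : Type} {n : ℕ} (G H : Grp n) (h : G ⊂ H) :
    cA (P := P) (n := n) G ∩ cA H = ∅ := by
  ext a
  simp only [Set.mem_inter_iff, Set.mem_empty_iff_false, iff_false, cA, Set.mem_setOf_eq]
  rintro ⟨⟨rfl, -⟩, ⟨h2, -⟩⟩
  exact h.ne h2

/-- The canonical model M^c(X_0). -/
def canonicalModel {P : Type} {n : ℕ} (X0 : Set (Formula P n)) : KhModel P n where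
  State := CState X0
  Act := CAct P n
  sim := csim X0
  sim_equiv := csim_equiv X0
  A := cA
  A_empty := cA_empty
  A_disj := cA_disj
  tr := ctr X0
  V := fun p => {s : CState X0 | Formula.atom p ∈ edOf X0 s.1}

/-! A larger group distinguishes more states (`∼_H ⊆ ∼_G`) and owns more distributed actions
(`A*_G ⊆ A*_H`), so a uniform strategy of `G` is also one of `H`. Every execution of it as an
`H`-strategy is an execution as a `G`-strategy, hence its leaves and its termination carry over. -/

section

variable {P : Type} {n : ℕ} {M : KhModel P n} {G H : Grp n}

theorem gsim_mono (hGH : G ⊆ H) {s t : M.State} (h : gsim M H s t) : gsim M G s t :=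
  fun i hi => h i (hGH hi)

theorem star_mono {Act : Type} {A : Grp n → Set Act} (hGH : G ⊆ H) {d : DAct Act}
    (h : star A G d) : star A H d := by
  cases h with
  | base hsub ha => exact star.base (hsub.trans hGH) ha
  | joint hlen hpp hchain hds =>
    exact star.joint hlen ⟨hpp.1, hpp.2.1, fun B hB => (hpp.2.2 B hB).trans hGH⟩ hchain hds

namespace Strategy

def ofSubset (σ : Strategy M G) (hGH : G ⊆ H) : Strategy M H where
  act := σ.act
  uniform s t hst := σ.uniform s t (gsim_mono hGH hst)
  mem_star s d hd := star_mono hGH (σ.mem_star s d hd)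
  exec s d hd t hst := σ.exec s d hd t (gsim_mono hGH hst)

variable (σ : Strategy M G) (hGH : G ⊆ H)

theorem stepRel_ofSubset {s t : M.State} (h : stepRel (σ.ofSubset hGH) s t) : stepRel σ s t :=
  let ⟨d, hd, u, v, hu, hv, huv⟩ := h
  ⟨d, hd, u, v, gsim_mono hGH hu, gsim_mono hGH hv, huv⟩

theorem CELeaf_ofSubset_subset (s : M.State) : CELeaf (σ.ofSubset hGH) s ⊆ CELeaf σ s :=
  fun _ ⟨m, f, h0, hstep, hstop, hlast⟩ =>
    ⟨m, f, gsim_mono hGH h0, fun j hj => σ.stepRel_ofSubset hGH (hstep j hj), hstop,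
      gsim_mono hGH hlast⟩

theorem infiniteFrom_of_ofSubset {s : M.State} (h : InfiniteFrom (σ.ofSubset hGH) s) :
    InfiniteFrom σ s :=
  let ⟨f, h0, hstep⟩ := h
  ⟨f, gsim_mono hGH h0, fun j => σ.stepRel_ofSubset hGH (hstep j)⟩

end Strategy

end

/-- Validity of AxKhMono: for G ⊆ H, if M,s ⊨ Kh_G φ then M,s ⊨ Kh_H φ. -/
theorem valid_AxKhMono {P : Type} [Countable P] {n : ℕ}
    (M : KhModel P n) (s : M.State) (φ : Formula P n) (G H : Grp n) (hGH : G ⊆ H)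
    (h : Sat M s (Formula.Kh G φ)) :
    Sat M s (Formula.Kh H φ) := by
  obtain ⟨σ, hleaf, hfinite⟩ := h
  exact ⟨σ.ofSubset hGH, fun t ht => hleaf t (σ.CELeaf_ofSubset_subset hGH s ht),
    fun hinf => hfinite (σ.infiniteFrom_of_ofSubset hGH hinf)⟩

end DKH
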